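/- For every natural number n ≥ 1 and every real s with 0 < s < 1, the omega combination of polygamma values satisfies ψ^{(2n)}(s/2) + ψ^{(2n)}((1-s)/2) - ψ^{(2n)}(1 - s/2) - ψ^{(2n)}((1+s)/2) = (-2)^{2n+1} · (2n)! · ( ∑' k : ℕ, (-1)^k / (k + s)^{2n+1} + ∑' k : ℕ, (-1)^k / (k + 1 - s)^{2n+1} ), where ψ^{(2n)}(t) = iteratedDeriv (2n+1) (fun x : ℝ => Real.log (Real.Gamma x)) t and the series are real tsums. -/

import Mathlib

/-!
Differentiating the Bohr–Mollerup approximations `log Γ_n` termwise (their derivatives converge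
locally uniformly) gives `ψ(x) = -γ + ∑ (1/(k+1) - 1/(x+k))`, and differentiating further,
`ψ^{(p)}(x) = (-1)^(p+1) p! ζ(p+1, x)` with the Hurwitz series `ζ(q, x) = ∑ 1/(x+k)^q`.
Splitting an alternating series into its even and odd terms gives
`ζ(q, t/2) - ζ(q, (1+t)/2) = 2^q ∑ (-1)^k/(k+t)^q`; the identity is this at `t = s` plus this at
`t = 1 - s`, since `1 - s/2 = (1 + (1 - s))/2`.
-/

open Real Filter Topology Finset

noncomputable def hurwitzSeries (p : ℕ) (x : ℝ) : ℝ := ∑' k : ℕ, ((x + k) ^ p)⁻¹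

theorem summable_inv_add_pow (x : ℝ) {p : ℕ} (hp : 2 ≤ p) :
    Summable fun k : ℕ => ((x + k) ^ p)⁻¹ := by
  refine Summable.of_norm (((summable_one_div_nat_add_rpow x p).2 (by exact_mod_cast hp)).congr
    fun k => ?_)
  rw [rpow_natCast, one_div, norm_inv, norm_pow, Real.norm_eq_abs, add_comm]

theorem hasDerivAt_inv_add_pow (p : ℕ) {k x : ℝ} (hx : x + k ≠ 0) :
    HasDerivAt (fun y : ℝ => ((y + k) ^ p)⁻¹) (-p * ((x + k) ^ (p + 1))⁻¹) x := by
  have h := (hasDerivAt_zpow (-(p : ℤ)) (x + k) (Or.inl hx)).comp_add_const x k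
  simp only [zpow_neg, zpow_natCast] at h
  refine h.congr_deriv ?_
  rw [show -(p : ℤ) - 1 = -((p + 1 : ℕ) : ℤ) by push_cast; ring, zpow_neg, zpow_natCast]
  push_cast
  ring

theorem hasDerivAt_tsum_of_hasDerivAt_inv_add_pow {f : ℕ → ℝ → ℝ} {c : ℝ} {q : ℕ}
    (hq : 2 ≤ q) (hf : ∀ k (y : ℝ), 0 < y → HasDerivAt (f k) (c * ((y + k) ^ q)⁻¹) y)
    {x : ℝ} (hx : 0 < x) (hsum : Summable fun k => f k x) :
    HasDerivAt (fun y => ∑' k, f k y) (c * hurwitzSeries q x) x := by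
  have hx2 : x ∈ Set.Ioi (x / 2) := half_lt_self hx
  rw [hurwitzSeries, ← tsum_mul_left]
  refine hasDerivAt_tsum_of_isPreconnected ((summable_inv_add_pow (x / 2) hq).mul_left |c|)
    isOpen_Ioi isPreconnected_Ioi (fun k y hy => hf k y (by linarith [Set.mem_Ioi.1 hy]))
    (fun k y hy => ?_) hx2 hsum hx2
  have hy : x / 2 < y := hy
  have hk : (0 : ℝ) ≤ k := k.cast_nonneg
  rw [norm_mul, Real.norm_eq_abs, norm_inv, norm_pow, Real.norm_eq_abs,
    abs_of_pos (by linarith : 0 < y + k)]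
  gcongr

theorem hasDerivAt_hurwitzSeries {p : ℕ} (hp : 2 ≤ p) {x : ℝ} (hx : 0 < x) :
    HasDerivAt (hurwitzSeries p) (-p * hurwitzSeries (p + 1) x) x :=
  hasDerivAt_tsum_of_hasDerivAt_inv_add_pow (by omega)
    (fun _ _ hy => hasDerivAt_inv_add_pow p (by positivity)) hx (summable_inv_add_pow x hp)

noncomputable def digammaSeries (x : ℝ) : ℝ :=
  -eulerMascheroniConstant + ∑' k : ℕ, (((k : ℝ) + 1)⁻¹ - (x + k)⁻¹)

theorem abs_inv_succ_sub_inv_add_le {a y : ℝ} (ha : 0 < a) (ha1 : a ≤ 1) (hy : a ≤ y) (k : ℕ) :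
    |((k : ℝ) + 1)⁻¹ - (y + k)⁻¹| ≤ |y - 1| / a * (((k : ℝ) + 1) ^ 2)⁻¹ := by
  have hk : (0 : ℝ) ≤ k := k.cast_nonneg
  have hak : a * (k + 1) ≤ y + k := by nlinarith
  have hyk : 0 < y + k := by linarith
  calc |((k : ℝ) + 1)⁻¹ - (y + k)⁻¹| = |y - 1| / ((k + 1) * (y + k)) := by
        rw [inv_sub_inv (by positivity) hyk.ne', abs_div, abs_of_pos (mul_pos (by positivity) hyk)]
        ring_nf
    _ ≤ |y - 1| / ((k + 1) * (a * (k + 1))) := by gcongr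
    _ = |y - 1| / a * (((k : ℝ) + 1) ^ 2)⁻¹ := by field_simp

theorem summable_inv_succ_sub_inv_add {x : ℝ} (hx : 0 < x) :
    Summable fun k : ℕ => ((k : ℝ) + 1)⁻¹ - (x + k)⁻¹ := by
  refine Summable.of_norm_bounded ((summable_inv_add_pow 1 le_rfl).mul_left (|x - 1| / min x 1))
    fun k => ?_
  rw [Real.norm_eq_abs, add_comm (1 : ℝ)]
  exact abs_inv_succ_sub_inv_add_le (lt_min hx one_pos) (min_le_right _ _) (min_le_left _ _) k

theorem hasDerivAt_logGammaSeq (n : ℕ) {y : ℝ} (hy : 0 < y) :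
    HasDerivAt (fun z => BohrMollerup.logGammaSeq z n)
      (log n - ∑ m ∈ range (n + 1), (y + m)⁻¹) y := by
  have hlin : HasDerivAt (fun z => z * log n + log n.factorial) (log n) y := by
    simpa using ((hasDerivAt_id y).mul_const (log n)).add_const (log n.factorial)
  have hlog : ∀ m ∈ range (n + 1), HasDerivAt (fun z => log (z + m)) (y + m)⁻¹ y := fun m _ => by
    simpa using ((hasDerivAt_id y).add_const (m : ℝ)).log (by positivity)
  exact hlin.fun_sub (.fun_sum hlog)

theorem tendsto_log_sub_sum_inv_succ :
    Tendsto (fun n : ℕ => log n - ∑ m ∈ range (n + 1), ((m : ℝ) + 1)⁻¹) atTop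
      (𝓝 (-eulerMascheroniConstant)) := by
  have := tendsto_harmonic_sub_log.neg.sub tendsto_one_div_add_atTop_nhds_zero_nat
  rw [sub_zero] at this
  refine this.congr fun n => ?_
  simp [harmonic, sum_range_succ]
  ring

theorem hasDerivAt_log_Gamma {x : ℝ} (hx : 0 < x) :
    HasDerivAt (fun y => log (Gamma y)) (digammaSeries x) x := by
  set a := min (x / 2) 1
  have ha : 0 < a := lt_min (half_pos hx) one_pos
  have hsum : TendstoUniformlyOn
      (fun N (y : ℝ) => ∑ m ∈ range N, (((m : ℝ) + 1)⁻¹ - (y + m)⁻¹))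
      (fun y => ∑' m : ℕ, (((m : ℝ) + 1)⁻¹ - (y + m)⁻¹)) atTop (Set.Ioo (x / 2) (x + 1)) := by
    refine tendstoUniformlyOn_tsum_nat ((summable_inv_add_pow 1 le_rfl).mul_left ((x + 1) / a))
      fun m y hy => ?_
    have hy1 : |y - 1| ≤ x + 1 := abs_le.2 ⟨by linarith [hy.1], by linarith [hy.2]⟩
    rw [Real.norm_eq_abs, add_comm (1 : ℝ)]
    refine (abs_inv_succ_sub_inv_add_le ha (min_le_right _ _)
      ((min_le_left _ _).trans hy.1.le) m).trans ?_
    gcongr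
  have hderiv : TendstoUniformlyOn (fun (n : ℕ) (y : ℝ) => log n - ∑ m ∈ range (n + 1), (y + m)⁻¹)
      digammaSeries atTop (Set.Ioo (x / 2) (x + 1)) := by
    have := (tendsto_log_sub_sum_inv_succ.tendstoUniformlyOn_const _).add
      (fun u hu => (tendsto_add_atTop_nat 1).eventually (hsum u hu))
    refine this.congr (.of_forall fun n y _ => ?_)
    simp only [Pi.add_apply, sum_sub_distrib]
    ring
  exact hasDerivAt_of_tendstoLocallyUniformlyOn isOpen_Ioo hderiv.tendstoLocallyUniformlyOn
    (.of_forall fun n y hy => hasDerivAt_logGammaSeq n (by linarith [hy.1]))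
    (fun y hy => BohrMollerup.tendsto_log_gamma (by linarith [hy.1]))
    ⟨half_lt_self hx, lt_add_one x⟩

theorem hasDerivAt_digammaSeries {x : ℝ} (hx : 0 < x) :
    HasDerivAt digammaSeries (hurwitzSeries 2 x) x := by
  have hterm : ∀ (k : ℕ) (y : ℝ), 0 < y → HasDerivAt (fun z : ℝ => ((k : ℝ) + 1)⁻¹ - (z + k)⁻¹)
      (1 * ((y + k) ^ 2)⁻¹) y := fun k y hy => by
    simpa using (hasDerivAt_inv_add_pow 1 (by positivity : y + k ≠ 0)).const_sub (((k : ℝ) + 1)⁻¹)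
  have := (hasDerivAt_tsum_of_hasDerivAt_inv_add_pow le_rfl hterm hx
    (summable_inv_succ_sub_inv_add hx)).const_add (-eulerMascheroniConstant)
  rwa [one_mul] at this

theorem iteratedDeriv_succ_log_Gamma {p : ℕ} (hp : 1 ≤ p) {x : ℝ} (hx : 0 < x) :
    iteratedDeriv (p + 1) (fun y => log (Gamma y)) x =
      (-1) ^ (p + 1) * p.factorial * hurwitzSeries (p + 1) x := by
  induction p, hp using Nat.le_induction generalizing x with
  | base =>
    have hderiv : deriv (fun y => log (Gamma y)) =ᶠ[𝓝 x] digammaSeries :=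
      eventually_of_mem (isOpen_Ioi.mem_nhds hx) fun y hy => (hasDerivAt_log_Gamma hy).deriv
    rw [iteratedDeriv_succ, iteratedDeriv_one, hderiv.deriv_eq,
      (hasDerivAt_digammaSeries hx).deriv]
    norm_num
  | succ p hp ih =>
    have hderiv : iteratedDeriv (p + 1) (fun y => log (Gamma y)) =ᶠ[𝓝 x]
        fun y => (-1) ^ (p + 1) * p.factorial * hurwitzSeries (p + 1) y :=
      eventually_of_mem (isOpen_Ioi.mem_nhds hx) fun y hy => ih hy
    rw [iteratedDeriv_succ, hderiv.deriv_eq,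
      ((hasDerivAt_hurwitzSeries (by omega) hx).const_mul _).deriv, Nat.factorial_succ]
    push_cast
    ring

theorem hurwitzSeries_div_two_sub_eq_tsum_alternating {p : ℕ} (hp : 2 ≤ p) (t : ℝ) :
    hurwitzSeries p (t / 2) - hurwitzSeries p ((1 + t) / 2) =
      2 ^ p * ∑' k : ℕ, (-1) ^ k / ((k : ℝ) + t) ^ p := by
  have hdouble : ∀ y : ℝ, 2 ^ p * ((2 * y) ^ p)⁻¹ = (y ^ p)⁻¹ := fun y => by
    rw [mul_pow, mul_inv, ← mul_assoc, mul_inv_cancel₀ (by positivity), one_mul]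
  have heven : ∀ j : ℕ, 2 ^ p * ((-1) ^ (2 * j) / (((2 * j : ℕ) : ℝ) + t) ^ p) =
      ((t / 2 + j) ^ p)⁻¹ := fun j => by
    rw [← hdouble, pow_mul, neg_one_sq, one_pow, one_div]
    push_cast
    ring_nf
  have hodd : ∀ j : ℕ, 2 ^ p * ((-1) ^ (2 * j + 1) / (((2 * j + 1 : ℕ) : ℝ) + t) ^ p) =
      -(((1 + t) / 2 + j) ^ p)⁻¹ := fun j => by
    rw [← hdouble, (odd_two_mul_add_one j).neg_one_pow, neg_div, one_div]
    push_cast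
    ring_nf
  rw [← tsum_mul_left,
    ← tsum_even_add_odd (f := fun k : ℕ => 2 ^ p * ((-1) ^ k / ((k : ℝ) + t) ^ p))]
  · simp only [heven, hodd, tsum_neg, hurwitzSeries, sub_eq_add_neg]
  · exact (summable_inv_add_pow _ hp).congr fun j => (heven j).symm
  · exact (summable_inv_add_pow _ hp).neg.congr fun j => (hodd j).symm

theorem omega_polygamma_alternating_sum (n : ℕ) (hn : 1 ≤ n) (s : ℝ)
    (hs0 : 0 < s) (hs1 : s < 1) :
    iteratedDeriv (2*n+1) (fun x : ℝ => Real.log (Real.Gamma x)) (s/2) +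
      iteratedDeriv (2*n+1) (fun x : ℝ => Real.log (Real.Gamma x)) ((1-s)/2) -
      iteratedDeriv (2*n+1) (fun x : ℝ => Real.log (Real.Gamma x)) (1 - s/2) -
      iteratedDeriv (2*n+1) (fun x : ℝ => Real.log (Real.Gamma x)) ((1+s)/2) =
      (-2 : ℝ)^(2*n+1) * (Nat.factorial (2*n) : ℝ) *
        ((∑' k : ℕ, (-1 : ℝ)^k / (k + s)^(2*n+1)) +
          ∑' k : ℕ, (-1 : ℝ)^k / (k + 1 - s)^(2*n+1)) := by
  have hp : 1 ≤ 2 * n := by omega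
  have hodd : Odd (2 * n + 1) := odd_two_mul_add_one n
  have hshift : ∑' k : ℕ, (-1 : ℝ) ^ k / (k + 1 - s) ^ (2 * n + 1) =
      ∑' k : ℕ, (-1 : ℝ) ^ k / (k + (1 - s)) ^ (2 * n + 1) := by
    simp only [add_sub_assoc]
  rw [iteratedDeriv_succ_log_Gamma hp (by linarith), iteratedDeriv_succ_log_Gamma hp (by linarith),
    iteratedDeriv_succ_log_Gamma hp (by linarith), iteratedDeriv_succ_log_Gamma hp (by linarith),
    show 1 - s / 2 = (1 + (1 - s)) / 2 by ring, hshift, hodd.neg_one_pow, hodd.neg_pow]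
  have hq : 2 ≤ 2 * n + 1 := by omega
  linear_combination (-(2 * n).factorial : ℝ) *
    (hurwitzSeries_div_two_sub_eq_tsum_alternating hq s +
      hurwitzSeries_div_two_sub_eq_tsum_alternating hq (1 - s))
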